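/- arXiv:1401.7955 — 3 statements merged into one kernel-verified Lean document; each statement's English description precedes it below -/
import Mathlib

section
/- Let G be a nonabelian 2-group with G/G' of type (2,4). Then the third term of the lower central series γ₃(G) is the unique maximal subgroup of G' that is normal in G, and it equals Φ(G')γ₃(G), where Φ denotes the Frattini subgroup. -/
/-!
Write `G = ⟨a, b⟩G'` with `a² ∈ G'`, as `G/G' ≅ C₂ × C₄` allows. In `G/γ₃(G)` commutators
are central, hence bimultiplicative, so `G'/γ₃(G)` is generated by the image of `[a, b]`, whose
square is `[a², b] ≡ 1`. Nilpotency rules out `G' = γ₃(G)`, so `[G' : γ₃(G)] = 2`, which makes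
`γ₃(G)` maximal in `G'` and puts `Φ(G')` inside it. A normal subgroup `N` maximal in `G'` but not
containing `γ₃(G)` would give `G' = Nγ₃(G)`; then `γ₂ = γ₃` in the nilpotent group `G/N`, which
forces `G' ≤ N`.
-/

open Subgroup
open scoped commutatorElement

namespace Subgroup

variable {G : Type*} [Group G]

theorem map_lowerCentralSeries_of_surjective {H : Type*} [Group H] {f : G →* H}
    (hf : Function.Surjective f) (n : ℕ) :
    (lowerCentralSeries (⊤ : Subgroup G) n).map f = lowerCentralSeries ⊤ n := by
  rw [map_lowerCentralSeries, map_top_of_surjective f hf]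

theorem lowerCentralSeries_eq_bot_of_succ_eq [Group.IsNilpotent G] {n : ℕ}
    (h : lowerCentralSeries (⊤ : Subgroup G) (n + 1) = lowerCentralSeries ⊤ n) :
    lowerCentralSeries (⊤ : Subgroup G) n = ⊥ := by
  have hstable : ∀ m, lowerCentralSeries (⊤ : Subgroup G) (n + m) = lowerCentralSeries ⊤ n := by
    intro m
    induction m with
    | zero => rfl
    | succ m ih => rw [← add_assoc, lowerCentralSeries_succ, ih, ← lowerCentralSeries_succ, h]
  obtain ⟨k, hk⟩ := nilpotent_iff_lowerCentralSeries.mp ‹Group.IsNilpotent G›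
  rw [← hstable k, eq_bot_iff, ← hk]
  exact lowerCentralSeries_antitone ⊤ (Nat.le_add_left k n)

theorem commutator_le_of_le_sup_lowerCentralSeries_two [Group.IsNilpotent G]
    (N : Subgroup G) [N.Normal] (h : _root_.commutator G ≤ N ⊔ lowerCentralSeries ⊤ 2) :
    _root_.commutator G ≤ N := by
  have hπ := QuotientGroup.mk'_surjective N
  have hstable : lowerCentralSeries (⊤ : Subgroup (G ⧸ N)) 2 = lowerCentralSeries ⊤ 1 := by
    refine le_antisymm (lowerCentralSeries_antitone ⊤ one_le_two) ?_
    rw [← map_lowerCentralSeries_of_surjective hπ, ← map_lowerCentralSeries_of_surjective hπ]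
    calc (lowerCentralSeries ⊤ 1).map (QuotientGroup.mk' N)
        ≤ (N ⊔ lowerCentralSeries ⊤ 2).map (QuotientGroup.mk' N) := map_mono h
      _ = (lowerCentralSeries ⊤ 2).map (QuotientGroup.mk' N) := by
        rw [map_sup, (map_eq_bot_iff N).mpr (QuotientGroup.ker_mk' N).ge, bot_sup_eq]
  have hbot := lowerCentralSeries_eq_bot_of_succ_eq hstable
  rwa [← map_lowerCentralSeries_of_surjective hπ, map_eq_bot_iff, QuotientGroup.ker_mk'] at hbot

theorem lowerCentralSeries_two_lt_commutator [Group.IsNilpotent G]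
    (hG : ¬ ∀ x y : G, Commute x y) :
    lowerCentralSeries (⊤ : Subgroup G) 2 < _root_.commutator G := by
  refine lt_of_le_of_ne (lowerCentralSeries_antitone ⊤ one_le_two) fun h => hG fun x y => ?_
  have hbot := lowerCentralSeries_eq_bot_of_succ_eq h
  rw [← commutatorElement_eq_one_iff_commute, ← mem_bot, ← hbot]
  exact commutator_mem_commutator (mem_top x) (mem_top y)

theorem lowerCentralSeries_two_le_of_maximal [Group.IsNilpotent G] (N : Subgroup G)
    [N.Normal] (hN : N < _root_.commutator G)
    (hmax : ∀ K : Subgroup G, N < K → K ≤ _root_.commutator G → K = _root_.commutator G) :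
    lowerCentralSeries ⊤ 2 ≤ N := by
  by_contra h
  have hsup := hmax _ (left_lt_sup.mpr h) (sup_le hN.le (lowerCentralSeries_antitone ⊤ one_le_two))
  exact hN.not_ge (commutator_le_of_le_sup_lowerCentralSeries_two N hsup.ge)

theorem map_mk_lowerCentralSeries_le_center (n : ℕ) :
    (lowerCentralSeries (⊤ : Subgroup G) n).map
      (QuotientGroup.mk' (lowerCentralSeries ⊤ (n + 1))) ≤ center _ := by
  rintro _ ⟨g, hg, rfl⟩
  rw [mem_center_iff]
  intro q
  induction q using QuotientGroup.induction_on with | H z => ?_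
  refine (commutatorElement_eq_one_iff_commute.mp ?_).symm.eq
  exact (QuotientGroup.eq_one_iff _).mpr (commutator_mem_commutator hg (mem_top z))

theorem commutator_quotient_lowerCentralSeries_two_le_center :
    _root_.commutator (G ⧸ lowerCentralSeries (⊤ : Subgroup G) 2) ≤ center _ := by
  rw [← top_lowerCentralSeries_one, ← map_lowerCentralSeries_of_surjective
    (QuotientGroup.mk'_surjective _)]
  exact map_mk_lowerCentralSeries_le_center 1

theorem eq_of_relIndex_prime {H K L : Subgroup G} (hp : (H.relIndex K).Prime) (hHL : H < L)
    (hLK : L ≤ K) : L = K := by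
  rw [← relIndex_mul_relIndex H L K hHL.le hLK, Nat.prime_mul_iff] at hp
  rcases hp with ⟨-, hLK'⟩ | ⟨-, hHL'⟩
  · exact le_antisymm hLK (relIndex_eq_one.mp hLK')
  · exact absurd (relIndex_eq_one.mp hHL') hHL.not_ge

theorem isCoatom_of_index_prime {H : Subgroup G} (hp : H.index.Prime) : IsCoatom H := by
  refine ⟨fun h => ?_, fun L hL => ?_⟩
  · rw [h, index_top] at hp
    exact Nat.not_prime_one hp
  · exact eq_of_relIndex_prime (by rwa [relIndex_top_right]) hL le_top

theorem map_subtype_frattini_le_of_relIndex_prime {H K : Subgroup G}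
    (hp : (H.relIndex K).Prime) : (frattini K).map K.subtype ≤ H :=
  calc (frattini K).map K.subtype ≤ (H.subgroupOf K).map K.subtype :=
        map_mono (frattini_le_coatom (isCoatom_of_index_prime hp))
    _ ≤ H := by rw [subgroupOf_map_subtype]; exact inf_le_left

theorem sup_eq_top_of_closure_image_mk_eq_top (N : Subgroup G) [N.Normal] {s : Set G}
    (hs : closure ((QuotientGroup.mk : G → G ⧸ N) '' s) = ⊤) : closure s ⊔ N = ⊤ := by
  rw [← QuotientGroup.ker_mk' N, ← comap_map_eq, MonoidHom.map_closure]
  exact (congrArg _ hs).trans (comap_top _)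

end Subgroup

section ClassTwo

variable {Q : Type*} [Group Q]

theorem commutatorElement_mem_center_of_le_center (hQ : _root_.commutator Q ≤ center Q)
    (x y : Q) : ⁅x, y⁆ ∈ center Q :=
  hQ (commutator_mem_commutator (mem_top x) (mem_top y))

theorem commutatorElement_mul_right_of_le_center (hQ : _root_.commutator Q ≤ center Q)
    (x y z : Q) : ⁅x, y * z⁆ = ⁅x, y⁆ * ⁅x, z⁆ := by
  have hz := mem_center_iff.mp (commutatorElement_mem_center_of_le_center hQ x z) y
  rw [commutatorElement_mul_right_eq_mul_conj, mul_assoc ⁅x, y⁆ y, hz]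
  group

def commutatorElementHom (hQ : _root_.commutator Q ≤ center Q) (x : Q) : Q →* Q where
  toFun y := ⁅x, y⁆
  map_one' := commutatorElement_one_right x
  map_mul' := commutatorElement_mul_right_of_le_center hQ x

theorem center_le_ker_commutatorElementHom (hQ : _root_.commutator Q ≤ center Q) (x : Q) :
    center Q ≤ (commutatorElementHom hQ x).ker :=
  fun _ hz => Commute.commutator_eq (mem_center_iff.mp hz x)

theorem commutatorElement_pow_left_of_le_center (hQ : _root_.commutator Q ≤ center Q)
    (x y : Q) (n : ℕ) : ⁅x ^ n, y⁆ = ⁅x, y⁆ ^ n := by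
  rw [← commutatorElement_inv, ← commutatorElement_inv y x, inv_pow]
  exact congrArg _ (map_pow (commutatorElementHom hQ y) x n)

theorem commutatorElement_mem_of_closure_sup_center_eq_top
    (hQ : _root_.commutator Q ≤ center Q) {s : Set Q} (hs : closure s ⊔ center Q = ⊤)
    {H : Subgroup Q} (hH : ∀ x ∈ s, ∀ y ∈ s, ⁅x, y⁆ ∈ H) (x y : Q) : ⁅x, y⁆ ∈ H := by
  have hext : ∀ x : Q, (∀ y ∈ s, ⁅x, y⁆ ∈ H) → ∀ y, ⁅x, y⁆ ∈ H := by
    intro x hx y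
    have : closure s ⊔ center Q ≤ H.comap (commutatorElementHom hQ x) :=
      sup_le ((closure_le _).mpr hx)
        ((center_le_ker_commutatorElementHom hQ x).trans (MonoidHom.ker_le_comap _ H))
    exact this (hs ▸ mem_top y)
  refine hext x (fun y hy => ?_) y
  rw [← commutatorElement_inv]
  exact inv_mem (hext y (hH y hy) x)

theorem commutator_le_zpowers_of_closure_sup_center_eq_top
    (hQ : _root_.commutator Q ≤ center Q) {a b : Q} (hab : closure {a, b} ⊔ center Q = ⊤) :
    _root_.commutator Q ≤ zpowers ⁅a, b⁆ := by
  rw [_root_.commutator_def, commutator_le]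
  refine fun x _ y _ => commutatorElement_mem_of_closure_sup_center_eq_top hQ hab ?_ x y
  have hba : ⁅b, a⁆ ∈ zpowers ⁅a, b⁆ := by
    rw [← commutatorElement_inv a b]
    exact inv_mem (mem_zpowers _)
  rintro x (rfl | rfl) y (rfl | rfl)
  · rw [commutatorElement_self]; exact one_mem _
  · exact mem_zpowers _
  · exact hba
  · rw [commutatorElement_self]; exact one_mem _

end ClassTwo

namespace Subgroup

variable {G : Type*} [Group G]

theorem relIndex_lowerCentralSeries_two_dvd {a b : G} {n : ℕ}
    (hgen : closure {a, b} ⊔ _root_.commutator G = ⊤) (ha : a ^ n ∈ _root_.commutator G) :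
    (lowerCentralSeries ⊤ 2).relIndex (_root_.commutator G) ∣ n := by
  set π := QuotientGroup.mk' (lowerCentralSeries (⊤ : Subgroup G) 2)
  have hπ : Function.Surjective π := QuotientGroup.mk'_surjective _
  have hQ := commutator_quotient_lowerCentralSeries_two_le_center (G := G)
  have hmap : (_root_.commutator G).map π = _root_.commutator _ :=
    map_lowerCentralSeries_of_surjective hπ 1
  have hker : (⊥ : Subgroup _).comap π = lowerCentralSeries ⊤ 2 := by
    rw [MonoidHom.comap_bot, QuotientGroup.ker_mk']
  have hgenQ : closure {π a, π b} ⊔ center _ = ⊤ := by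
    refine eq_top_iff.mpr ?_
    calc ⊤ = (closure {a, b} ⊔ _root_.commutator G).map π := by
          rw [hgen, map_top_of_surjective π hπ]
      _ = closure {π a, π b} ⊔ _root_.commutator _ := by
          rw [map_sup, MonoidHom.map_closure, Set.image_pair, hmap]
      _ ≤ closure {π a, π b} ⊔ center _ := sup_le_sup_left hQ _
  have hpow : ⁅π a, π b⁆ ^ n = 1 := by
    rw [← commutatorElement_pow_left_of_le_center hQ, ← map_pow]
    exact Commute.commutator_eq (mem_center_iff.mp (hQ (hmap ▸ mem_map_of_mem π ha)) (π b)).symm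
  calc (lowerCentralSeries ⊤ 2).relIndex (_root_.commutator G)
      = ((⊥ : Subgroup _).comap π).relIndex (_root_.commutator G) := by rw [hker]
    _ = Nat.card (_root_.commutator (G ⧸ lowerCentralSeries (⊤ : Subgroup G) 2)) := by
        rw [relIndex_comap, relIndex_bot_left, hmap]
    _ ∣ Nat.card (zpowers ⁅π a, π b⁆) :=
        card_dvd_of_le (commutator_le_zpowers_of_closure_sup_center_eq_top hQ hgenQ)
    _ = orderOf ⁅π a, π b⁆ := Nat.card_zpowers _
    _ ∣ n := orderOf_dvd_of_pow_eq_one hpow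

theorem closure_pair_eq_top_zmod_two_prod_zmod_four :
    closure {Multiplicative.ofAdd ((1, 0) : ZMod 2 × ZMod 4),
      Multiplicative.ofAdd ((0, 1) : ZMod 2 × ZMod 4)} = ⊤ := by
  have hdecomp : ∀ x : Multiplicative (ZMod 2 × ZMod 4),
      x = Multiplicative.ofAdd ((1, 0) : ZMod 2 × ZMod 4) ^ (Multiplicative.toAdd x).1.val *
        Multiplicative.ofAdd ((0, 1) : ZMod 2 × ZMod 4) ^ (Multiplicative.toAdd x).2.val := by
    decide
  refine eq_top_iff.mpr fun x _ => hdecomp x ▸ mul_mem ?_ ?_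
  all_goals exact pow_mem (subset_closure (by simp)) _

theorem exists_closure_pair_sup_commutator_eq_top
    (e : G ⧸ _root_.commutator G ≃* Multiplicative (ZMod 2 × ZMod 4)) :
    ∃ a b : G, closure {a, b} ⊔ _root_.commutator G = ⊤ ∧ a ^ 2 ∈ _root_.commutator G := by
  obtain ⟨a, ha⟩ := QuotientGroup.mk_surjective (e.symm (Multiplicative.ofAdd (1, 0)))
  obtain ⟨b, hb⟩ := QuotientGroup.mk_surjective (e.symm (Multiplicative.ofAdd (0, 1)))
  refine ⟨a, b, sup_eq_top_of_closure_image_mk_eq_top _ ?_, ?_⟩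
  · rw [Set.image_pair, ha, hb, ← map_top_of_surjective e.symm.toMonoidHom e.symm.surjective,
      ← closure_pair_eq_top_zmod_two_prod_zmod_four, MonoidHom.map_closure, Set.image_pair]
    rfl
  · rw [← QuotientGroup.eq_one_iff, QuotientGroup.mk_pow, ha, ← map_pow]
    exact (congrArg e.symm (by decide)).trans (map_one e.symm)

end Subgroup

/-- Let `G` be a nonabelian finite 2-group with `G/G'` of type `(2,4)`. Then
`γ₃(G)` is the unique maximal subgroup of `G' = γ₂(G)` that is normal in `G`,
and it equals `Φ(G')γ₃(G)` where `Φ` is the Frattini subgroup. -/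
theorem gamma3_unique_maximal_normal
    {G : Type*} [Group G] [Finite G] (hG : IsPGroup 2 G)
    (hnab : ¬ ∀ x y : G, Commute x y)
    (htype : Nonempty ((G ⧸ commutator G) ≃* Multiplicative (ZMod 2 × ZMod 4))) :
    ((⊤ : Subgroup G).lowerCentralSeries 2 < commutator G ∧ ((⊤ : Subgroup G).lowerCentralSeries 2).Normal ∧
      (∀ K : Subgroup G, (⊤ : Subgroup G).lowerCentralSeries 2 < K → K ≤ commutator G →
        K = commutator G) ∧
      (∀ N : Subgroup G, N.Normal → N < commutator G →
        (∀ K : Subgroup G, N < K → K ≤ commutator G → K = commutator G) →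
        N = (⊤ : Subgroup G).lowerCentralSeries 2)) ∧
    Subgroup.map (commutator G).subtype (frattini ↥(commutator G)) ⊔
        (⊤ : Subgroup G).lowerCentralSeries 2 = (⊤ : Subgroup G).lowerCentralSeries 2 := by
  have := hG.isNilpotent
  obtain ⟨a, b, hgen, ha⟩ := exists_closure_pair_sup_commutator_eq_top htype.some
  have hlt := lowerCentralSeries_two_lt_commutator hnab
  have hindex : ((⊤ : Subgroup G).lowerCentralSeries 2).relIndex (commutator G) = 2 :=
    ((Nat.dvd_prime Nat.prime_two).mp (relIndex_lowerCentralSeries_two_dvd hgen ha)).resolve_left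
      (mt relIndex_eq_one.mp hlt.not_ge)
  have hprime := hindex ▸ Nat.prime_two
  have hmax := fun K => eq_of_relIndex_prime (L := K) hprime
  refine ⟨⟨hlt, inferInstance, hmax, fun N hN hNlt hNmax => ?_⟩,
    sup_eq_right.mpr (map_subtype_frattini_le_of_relIndex_prime hprime)⟩
  have hle := lowerCentralSeries_two_le_of_maximal N hNlt hNmax
  exact (hle.eq_or_lt.resolve_right fun h => hNlt.ne (hmax N h hNlt.le)).symm
end

section
/- Let G be a nonabelian 2-group with G/G' of type (2,4). Then the index of γ₂(G) in itself over γ₃(G) is 2, i.e., [γ₂(G) : γ₃(G)] = 2. -/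
/-!
Pass to `Q = G ⧸ γ₃(G)`, in which `Q'` is central. Lifting generators of `G ⧸ G' ≅ C₂ × C₄`
gives `x, y` with `Q = ⟨x, y⟩ Q'` and `x² ∈ Q'`. Modulo the central subgroup `⟨[x, y]⟩` the
generators `x, y` commute, so `Q' = ⟨[x, y]⟩`, and `[x, y]² = [x², y] = 1`. Hence `|Q'| ≤ 2`;
and `Q' ≠ 1`, since in a nilpotent group `G' = γ₃(G)` forces `G' = 1`.
-/

open Subgroup
open scoped commutatorElement

theorem closure_ofAdd_pair_eq_top (m n : ℕ) :
    Subgroup.closure {Multiplicative.ofAdd ((1 : ZMod m), (0 : ZMod n)),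
      Multiplicative.ofAdd ((0 : ZMod m), (1 : ZMod n))} = ⊤ := by
  refine (Subgroup.eq_top_iff' _).mpr fun g ↦ ?_
  have : g = Multiplicative.ofAdd ((1 : ZMod m), (0 : ZMod n)) ^ (g.toAdd.1.cast : ℤ) *
      Multiplicative.ofAdd ((0 : ZMod m), (1 : ZMod n)) ^ (g.toAdd.2.cast : ℤ) := by
    apply Multiplicative.toAdd.injective
    ext <;> simp
  rw [this]
  exact mul_mem (zpow_mem (subset_closure (.inl rfl)) _) (zpow_mem (subset_closure (.inr rfl)) _)

section

variable {G : Type*} [Group G]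

theorem Subgroup.top_lowerCentralSeries_eq_bot_of_le_succ [Group.IsNilpotent G] {n : ℕ}
    (h : (⊤ : Subgroup G).lowerCentralSeries n ≤
      (⊤ : Subgroup G).lowerCentralSeries (n + 1)) :
    (⊤ : Subgroup G).lowerCentralSeries n = ⊥ := by
  have hle : ∀ k, (⊤ : Subgroup G).lowerCentralSeries n ≤
      (⊤ : Subgroup G).lowerCentralSeries (n + k) := by
    intro k
    induction k with
    | zero => rfl
    | succ k ih => exact h.trans (commutator_mono ih le_rfl)
  refine le_bot_iff.mp ((hle (Group.nilpotencyClass G)).trans_eq ?_)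
  exact lowerCentralSeries_eq_bot_iff_nilpotencyClass_le.mpr (Nat.le_add_left _ _)

theorem Subgroup.top_lowerCentralSeries_quotient_le_center (n : ℕ) :
    (⊤ : Subgroup (G ⧸ (⊤ : Subgroup G).lowerCentralSeries (n + 1))).lowerCentralSeries n ≤
      center (G ⧸ (⊤ : Subgroup G).lowerCentralSeries (n + 1)) := by
  set π := QuotientGroup.mk' ((⊤ : Subgroup G).lowerCentralSeries (n + 1))
  rw [← commutator_top_right_eq_bot_iff_le_center, ← lowerCentralSeries_succ,
    ← map_top_of_surjective π (QuotientGroup.mk'_surjective _), ← map_lowerCentralSeries,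
    map_eq_bot_iff, QuotientGroup.ker_mk']

theorem commutatorElement_sq_left {x y : G} (h : Commute x ⁅x, y⁆) :
    ⁅x ^ 2, y⁆ = ⁅x, y⁆ ^ 2 := by
  have : ⁅x * x, y⁆ = x * ⁅x, y⁆ * x⁻¹ * ⁅x, y⁆ := by group
  rw [sq, this, h.eq, mul_inv_cancel_right, sq]

theorem isMulCommutative_of_closure_pair_sup_center_eq_top {x y : G} (hxy : Commute x y)
    (h : closure {x, y} ⊔ center G = ⊤) : IsMulCommutative G := by
  have hcomm : ∀ a ∈ ({x, y} ∪ center G : Set G), ∀ b ∈ ({x, y} ∪ center G : Set G),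
      a * b = b * a := by
    rintro a ((rfl | rfl) | ha) b ((rfl | rfl) | hb)
    all_goals first
      | rfl | exact hxy.eq | exact hxy.eq.symm
      | exact (mem_center_iff.mp ha b).symm | exact mem_center_iff.mp hb a
  have := isMulCommutative_closure hcomm
  rw [Subgroup.closure_union, closure_eq, h] at this
  exact .of_comm fun a b ↦ setLike_mul_comm (mem_top a) (mem_top b)

theorem Subgroup.map_center_le_center {H : Type*} [Group H] {f : G →* H}
    (hf : Function.Surjective f) : (center G).map f ≤ center H := by
  rintro _ ⟨z, hz, rfl⟩
  refine mem_center_iff.mpr fun h ↦ ?_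
  obtain ⟨g, rfl⟩ := hf h
  rw [← map_mul, ← map_mul, mem_center_iff.mp hz g]

theorem commutator_le_zpowers_commutatorElement (hcen : commutator G ≤ center G) {x y : G}
    (hgen : closure {x, y} ⊔ commutator G = ⊤) : commutator G ≤ zpowers ⁅x, y⁆ := by
  set C := zpowers ⁅x, y⁆
  have hC : C ≤ center G :=
    zpowers_le.mpr (hcen (commutator_mem_commutator (mem_top x) (mem_top y)))
  have : C.Normal :=
    ⟨fun c hc g ↦ by rwa [mem_center_iff.mp (hC hc) g, mul_inv_cancel_right]⟩
  set π := QuotientGroup.mk' C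
  refine Normal.quotient_commutative_iff_commutator_le.mp
    (isMulCommutative_of_closure_pair_sup_center_eq_top (x := π x) (y := π y) ?_ ?_)
  · rw [← commutatorElement_eq_one_iff_commute, ← map_commutatorElement, QuotientGroup.mk'_apply,
      QuotientGroup.eq_one_iff]
    exact mem_zpowers _
  · refine top_le_iff.mp ?_
    rw [← map_top_of_surjective π (QuotientGroup.mk'_surjective C), ← hgen, Subgroup.map_sup,
      MonoidHom.map_closure, Set.image_pair]
    exact sup_le_sup_left
      ((map_mono hcen).trans (map_center_le_center (QuotientGroup.mk'_surjective C))) _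

theorem card_commutator_dvd_two (hcen : commutator G ≤ center G) {x y : G}
    (hx : x ^ 2 ∈ commutator G) (hgen : closure {x, y} ⊔ commutator G = ⊤) :
    Nat.card (commutator G) ∣ 2 := by
  have hsq : ⁅x, y⁆ ^ 2 = 1 := by
    rw [← commutatorElement_sq_left, commutatorElement_eq_one_iff_commute]
    · exact (mem_center_iff.mp (hcen hx) y).symm
    · exact mem_center_iff.mp (hcen (commutator_mem_commutator (mem_top x) (mem_top y))) x
  calc Nat.card (commutator G) ∣ Nat.card (zpowers ⁅x, y⁆) :=
        card_dvd_of_le (commutator_le_zpowers_commutatorElement hcen hgen)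
    _ = orderOf ⁅x, y⁆ := Nat.card_zpowers _
    _ ∣ 2 := orderOf_dvd_of_pow_eq_one hsq

theorem exists_pow_mem_commutator_and_closure_pair_sup_commutator_eq_top {m n : ℕ}
    (e : G ⧸ commutator G ≃* Multiplicative (ZMod m × ZMod n)) :
    ∃ x y : G, x ^ m ∈ commutator G ∧ closure {x, y} ⊔ commutator G = ⊤ := by
  set f := e.toMonoidHom.comp (QuotientGroup.mk' (commutator G))
  have hf : Function.Surjective f := e.surjective.comp (QuotientGroup.mk'_surjective _)
  have hker : f.ker = commutator G := by
    ext g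
    simp [f]
  obtain ⟨x, hx⟩ := hf (Multiplicative.ofAdd (1, 0))
  obtain ⟨y, hy⟩ := hf (Multiplicative.ofAdd (0, 1))
  refine ⟨x, y, ?_, ?_⟩
  · rw [← hker, MonoidHom.mem_ker, map_pow, hx, ← ofAdd_nsmul]
    simp
  · rw [← hker, ← comap_map_eq, MonoidHom.map_closure, Set.image_pair, hx, hy,
      closure_ofAdd_pair_eq_top, comap_top]

end

/-- Let `G` be a nonabelian finite 2-group with `G/G'` of type `(2,4)`. Then
`[γ₂(G) : γ₃(G)] = 2`. -/
theorem index_gamma2_gamma3_eq_two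
    {G : Type*} [Group G] [Finite G] (hG : IsPGroup 2 G)
    (hnab : ¬ ∀ x y : G, Commute x y)
    (htype : Nonempty ((G ⧸ commutator G) ≃* Multiplicative (ZMod 2 × ZMod 4))) :
    ((⊤ : Subgroup G).lowerCentralSeries 2).relIndex ((⊤ : Subgroup G).lowerCentralSeries 1) = 2 := by
  have := hG.isNilpotent
  obtain ⟨x, y, hx, hgen⟩ :=
    exists_pow_mem_commutator_and_closure_pair_sup_commutator_eq_top htype.some
  set N := (⊤ : Subgroup G).lowerCentralSeries 2
  set π := QuotientGroup.mk' N
  have hπ : Function.Surjective π := QuotientGroup.mk'_surjective N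
  have hmap : (commutator G).map π = commutator (G ⧸ N) := by
    rw [← top_lowerCentralSeries_one, map_lowerCentralSeries, map_top_of_surjective π hπ,
      top_lowerCentralSeries_one]
  rw [← QuotientGroup.ker_mk' N, relIndex_ker, top_lowerCentralSeries_one, hmap]
  have hne : commutator (G ⧸ N) ≠ ⊥ := by
    rw [← hmap, Ne, Subgroup.map_eq_bot_iff, QuotientGroup.ker_mk']
    intro hle
    have := (_root_.commutator_eq_bot_iff G).mp
      (top_lowerCentralSeries_eq_bot_of_le_succ (n := 1) hle)
    exact hnab fun a b ↦ mul_comm' a b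
  have hdvd : Nat.card (commutator (G ⧸ N)) ∣ 2 := by
    refine card_commutator_dvd_two (top_lowerCentralSeries_quotient_le_center 1)
      (x := π x) (y := π y) (hmap ▸ mem_map_of_mem π hx) ?_
    rw [← hmap, ← Set.image_pair, ← MonoidHom.map_closure, ← Subgroup.map_sup, hgen,
      map_top_of_surjective π hπ]
  rcases (Nat.dvd_prime Nat.prime_two).mp hdvd with h | h
  · exact absurd (card_eq_one.mp h) hne
  · exact h
end

section
/- Let G = Gₘ be one of the metacyclic nonmodular 2-groups of order 2ⁿ with G/G' of type (2,4), and let M = ⟨a, b²⟩. Then M' has order at most 2; precisely M' = 1 if G = G₁, G₂, or G₃, and M' = ⟨a^{2^{n-3}}⟩ if G = G₄. -/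
/-!
Write `c = b²`. From `a^b = a^k` one gets `a^(bᵐ) = a^(kᵐ)`, so `a^c = a^((2^j - 1)²)` when
`z₂ = a^(2^j)`, and `a^c = a` when `z₂ = 1`. Since `a` has order dividing `2^(n-2)`, this gives
`a^c = a` for `G₁, G₂, G₃` and `a^c = a t` with `t = a^(2^(n-3))` an involution for `G₄`.
A group generated by `x, y` whose commutator `t = [x, y]` commutes with `x` and `y` has derived
subgroup `⟨t⟩`: `t` is central, and modulo `⟨t⟩` the group is generated by two commuting elements.
-/

open Subgroup
open scoped commutatorElement

section Commutator

variable {G : Type*} [Group G]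

theorem commutator_le_of_closure_eq_top {s : Set G} (hs : closure s = ⊤) (N : Subgroup G)
    [N.Normal] (h : ∀ x ∈ s, ∀ y ∈ s, ⁅x, y⁆ ∈ N) : commutator G ≤ N := by
  let π := QuotientGroup.mk' N
  have hcomm : ∀ u ∈ π '' s, ∀ v ∈ π '' s, u * v = v * u := by
    rintro _ ⟨x, hx, rfl⟩ _ ⟨y, hy, rfl⟩
    rw [← commutatorElement_eq_one_iff_mul_comm, ← map_commutatorElement,
      QuotientGroup.mk'_apply, QuotientGroup.eq_one_iff]
    exact h x hx y hy
  have hπ : ∀ g, π g ∈ closure (π '' s) := fun g => by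
    rw [← MonoidHom.map_closure, hs]
    exact mem_map_of_mem π (mem_top g)
  rw [_root_.commutator_def, commutator_le]
  intro g _ h _
  rw [← QuotientGroup.eq_one_iff, ← QuotientGroup.mk'_apply, map_commutatorElement,
    commutatorElement_eq_one_iff_mul_comm]
  exact Set.centralizer_centralizer_comm_of_comm hcomm _
    (closure_le_centralizer_centralizer _ (hπ g)) _ (closure_le_centralizer_centralizer _ (hπ h))

theorem commutator_eq_zpowers_of_closure_pair_eq_top {x y : G} (hxy : closure {x, y} = ⊤)
    (hx : Commute ⁅x, y⁆ x) (hy : Commute ⁅x, y⁆ y) : commutator G = zpowers ⁅x, y⁆ := by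
  have hcen : ⁅x, y⁆ ∈ center G := by
    rw [center_eq_iInf hxy]
    simp only [mem_iInf, Set.mem_insert_iff, Set.mem_singleton_iff, mem_centralizer_singleton_iff]
    rintro g (rfl | rfl)
    exacts [hx.eq, hy.eq]
  have : (zpowers ⁅x, y⁆).Normal := ⟨fun u hu g => by
    rwa [mem_center_iff.mp (zpowers_le.mpr hcen hu) g, mul_inv_cancel_right]⟩
  refine le_antisymm (commutator_le_of_closure_eq_top hxy _ ?_) ?_
  · rintro u (rfl | rfl) v (rfl | rfl)
    · simp
    · exact mem_zpowers _
    · rw [← commutatorElement_inv (g₁ := v)]; exact inv_mem (mem_zpowers _)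
    · simp
  · rw [zpowers_le, _root_.commutator_def]
    exact commutator_mem_commutator (mem_top x) (mem_top y)

theorem commutator_closure_pair_eq_zpowers {x y t : G} (htx : Commute t x) (hty : Commute t y)
    (h : y⁻¹ * x * y = x * t) : ⁅closure {x, y}, closure {x, y}⁆ = zpowers t := by
  have hxy : ⁅x, y⁆ = t := by
    calc ⁅x, y⁆ = y * (y⁻¹ * x * y) * x⁻¹ * y⁻¹ := by group
    _ = t := by
      rw [h, ← htx.eq, ← mul_assoc, mul_inv_cancel_right, ← hty.eq, mul_inv_cancel_right]
  subst hxy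
  -- `zpowers ⁅x, y⁆` need not be normal in `G`, so we argue inside `K`.
  set K := closure {x, y}
  let x' : K := ⟨x, subset_closure (by simp)⟩
  let y' : K := ⟨y, subset_closure (by simp)⟩
  have hK : closure {x', y'} = ⊤ := by
    convert closure_closure_coe_preimage (k := {x, y}) using 2
    ext ⟨g, hg⟩
    simp [x', y', Subtype.ext_iff]
  have hderived := commutator_eq_zpowers_of_closure_pair_eq_top hK
    (Subtype.ext htx.eq) (Subtype.ext hty.eq)
  rw [← map_subtype_commutator, hderived, MonoidHom.map_zpowers]
  rfl

end Commutator

section Metacyclic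

variable {G : Type*} [Group G] {a b : G}

theorem pow_two_pow_eq_one_of_le {m k : ℕ} (ha : a ^ 2 ^ m = 1) (h : m ≤ k) : a ^ 2 ^ k = 1 := by
  obtain ⟨d, rfl⟩ := Nat.exists_eq_add_of_le h
  rw [pow_add, pow_mul, ha, one_pow]

theorem conj_pow_eq_zpow_pow {k : ℤ} (h : b⁻¹ * a * b = a ^ k) (m : ℕ) :
    (b ^ m)⁻¹ * a * b ^ m = a ^ k ^ m := by
  induction m with
  | zero => simp
  | succ m ih =>
    calc (b ^ (m + 1))⁻¹ * a * b ^ (m + 1) = b⁻¹ * ((b ^ m)⁻¹ * a * b ^ m) * b⁻¹⁻¹ := by group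
    _ = (b⁻¹ * a * b) ^ k ^ m := by rw [ih, ← conj_zpow, inv_inv]
    _ = a ^ k ^ (m + 1) := by rw [h, ← zpow_mul, pow_succ']

theorem sq_conj_eq_of_conj_eq_inv (h : b⁻¹ * a * b = a⁻¹) : (b ^ 2)⁻¹ * a * b ^ 2 = a := by
  simpa using conj_pow_eq_zpow_pow (k := -1) (by rwa [zpow_neg_one]) 2

theorem sq_conj_eq_of_conj_eq_inv_mul_two_pow {m j : ℕ} (ha : a ^ 2 ^ m = 1) (hj : m ≤ 2 * j)
    (h : b⁻¹ * a * b = a⁻¹ * a ^ 2 ^ j) : (b ^ 2)⁻¹ * a * b ^ 2 = a * (a ^ 2 ^ (j + 1))⁻¹ := by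
  have hk : b⁻¹ * a * b = a ^ (-1 + (2 ^ j : ℕ) : ℤ) := by
    rw [h, zpow_add, zpow_neg_one, zpow_natCast]
  have hsq : ((-1 + (2 ^ j : ℕ) : ℤ)) ^ 2 = 1 - (2 ^ (j + 1) : ℕ) + (2 ^ (2 * j) : ℕ) := by
    push_cast; ring
  rw [conj_pow_eq_zpow_pow hk, hsq, zpow_add, zpow_sub, zpow_one, zpow_natCast, zpow_natCast,
    pow_two_pow_eq_one_of_le ha hj, mul_one]

theorem commute_pow_of_conj_eq_mul_pow {c : G} {e : ℕ} (h : c⁻¹ * a * c = a * a ^ e)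
    (he : a ^ (e * e) = 1) : Commute (a ^ e) c := by
  have hconj : c⁻¹ * a ^ e * c = a ^ e := by
    calc c⁻¹ * a ^ e * c = (c⁻¹ * a * c⁻¹⁻¹) ^ e := by rw [conj_pow, inv_inv]
    _ = a ^ e * a ^ (e * e) := by rw [inv_inv, h, (Commute.self_pow a e).mul_pow, ← pow_mul]
    _ = a ^ e := by rw [he, mul_one]
  calc a ^ e * c = c * (c⁻¹ * a ^ e * c) := by group
  _ = c * a ^ e := by rw [hconj]

end Metacyclic

theorem derived_of_M_small_general
    {G : Type*} [Group G] (n : ℕ) (a b z₁ z₂ : G)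
    (ha : a ^ 2 ^ (n - 2) = 1)
    (hconj : b⁻¹ * a * b = a⁻¹ * z₂)
    (hfam : (z₁ = 1 ∧ z₂ = 1) ∨
      (5 ≤ n ∧ z₁ = 1 ∧ z₂ = a ^ 2 ^ (n - 3)) ∨
      (5 ≤ n ∧ z₁ = a ^ 2 ^ (n - 3) ∧ z₂ = 1) ∨
      (6 ≤ n ∧ z₁ = 1 ∧ z₂ = a ^ 2 ^ (n - 4)))
    (M : Subgroup G) (hM : M = Subgroup.closure {a, b ^ 2}) :
    Nat.card (Subgroup.map M.subtype (commutator ↥M)) ≤ 2 ∧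
    (((z₁ = 1 ∧ z₂ = 1) ∨ (5 ≤ n ∧ z₁ = 1 ∧ z₂ = a ^ 2 ^ (n - 3)) ∨
        (5 ≤ n ∧ z₁ = a ^ 2 ^ (n - 3) ∧ z₂ = 1)) →
      Subgroup.map M.subtype (commutator ↥M) = ⊥) ∧
    ((6 ≤ n ∧ z₁ = 1 ∧ z₂ = a ^ 2 ^ (n - 4)) →
      Subgroup.map M.subtype (commutator ↥M) = Subgroup.zpowers (a ^ 2 ^ (n - 3))) := by
  subst hM
  rw [map_subtype_commutator]
  have of_commute (h : (b ^ 2)⁻¹ * a * b ^ 2 = a) :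
      ⁅closure {a, b ^ 2}, closure {a, b ^ 2}⁆ = ⊥ := by
    rw [commutator_closure_pair_eq_zpowers (.one_left a) (.one_left _) (by rw [h, mul_one]),
      zpowers_one_eq_bot]
  have hG₁₃ (hz : z₂ = 1) : ⁅closure {a, b ^ 2}, closure {a, b ^ 2}⁆ = ⊥ :=
    of_commute (sq_conj_eq_of_conj_eq_inv (by rw [hconj, hz, mul_one]))
  have hG₂ (hn : 5 ≤ n) (hz : z₂ = a ^ 2 ^ (n - 3)) :
      ⁅closure {a, b ^ 2}, closure {a, b ^ 2}⁆ = ⊥ := by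
    have hc := sq_conj_eq_of_conj_eq_inv_mul_two_pow ha (j := n - 3) (by omega) (hz ▸ hconj)
    rw [show n - 3 + 1 = n - 2 by omega, ha, inv_one, mul_one] at hc
    exact of_commute hc
  have ht (hn : 3 ≤ n) : (a ^ 2 ^ (n - 3)) ^ 2 = 1 := by
    rw [← pow_mul, ← pow_succ, show n - 3 + 1 = n - 2 by omega, ha]
  have hG₄ (hn : 6 ≤ n) (hz : z₂ = a ^ 2 ^ (n - 4)) :
      ⁅closure {a, b ^ 2}, closure {a, b ^ 2}⁆ = zpowers (a ^ 2 ^ (n - 3)) := by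
    have hc := sq_conj_eq_of_conj_eq_inv_mul_two_pow ha (j := n - 4) (by omega) (hz ▸ hconj)
    rw [show n - 4 + 1 = n - 3 by omega,
      inv_eq_of_mul_eq_one_right (a := a ^ 2 ^ (n - 3)) (by rw [← sq, ht (by omega)])] at hc
    have hcomm := commute_pow_of_conj_eq_mul_pow hc
      (by rw [← pow_add]; exact pow_two_pow_eq_one_of_le (k := n - 3 + (n - 3)) ha (by omega))
    exact commutator_closure_pair_eq_zpowers (Commute.self_pow a _).symm hcomm hc
  refine ⟨?_, ?_, fun ⟨hn, _, hz⟩ => hG₄ hn hz⟩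
  · rcases hfam with ⟨_, hz⟩ | ⟨hn, _, hz⟩ | ⟨_, _, hz⟩ | ⟨hn, _, hz⟩
    · simp [hG₁₃ hz]
    · simp [hG₂ hn hz]
    · simp [hG₁₃ hz]
    · rw [hG₄ hn hz, Nat.card_zpowers]
      exact orderOf_le_of_pow_eq_one two_pos (ht (by omega))
  · rintro (⟨_, hz⟩ | ⟨hn, _, hz⟩ | ⟨_, _, hz⟩)
    exacts [hG₁₃ hz, hG₂ hn hz, hG₁₃ hz]

/-- Let `G = Gₘ = ⟨a, b : a^{2^{n-2}} = 1, b⁴ = z₁, a^b = a⁻¹z₂⟩` be one of the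
metacyclic nonmodular 2-groups of order `2ⁿ` with `G/G'` of type `(2,4)`, and
let `M = ⟨a, b²⟩`. Then `M'` has order at most 2; precisely `M' = 1` if
`G = G₁, G₂, G₃`, and `M' = ⟨a^{2^{n-3}}⟩` if `G = G₄`. -/
theorem derived_of_M_small
    {G : Type*} [Group G] (n : ℕ) (hn : 4 ≤ n) (a b z₁ z₂ : G)
    (ha : a ^ 2 ^ (n - 2) = 1) (hb4 : b ^ 4 = z₁)
    (hconj : b⁻¹ * a * b = a⁻¹ * z₂)
    (hgen : Subgroup.closure {a, b} = ⊤)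
    (hfam : (z₁ = 1 ∧ z₂ = 1) ∨
      (5 ≤ n ∧ z₁ = 1 ∧ z₂ = a ^ 2 ^ (n - 3)) ∨
      (5 ≤ n ∧ z₁ = a ^ 2 ^ (n - 3) ∧ z₂ = 1) ∨
      (6 ≤ n ∧ z₁ = 1 ∧ z₂ = a ^ 2 ^ (n - 4)))
    (M : Subgroup G) (hM : M = Subgroup.closure {a, b ^ 2}) :
    Nat.card (Subgroup.map M.subtype (commutator ↥M)) ≤ 2 ∧
    (((z₁ = 1 ∧ z₂ = 1) ∨ (5 ≤ n ∧ z₁ = 1 ∧ z₂ = a ^ 2 ^ (n - 3)) ∨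
        (5 ≤ n ∧ z₁ = a ^ 2 ^ (n - 3) ∧ z₂ = 1)) →
      Subgroup.map M.subtype (commutator ↥M) = ⊥) ∧
    ((6 ≤ n ∧ z₁ = 1 ∧ z₂ = a ^ 2 ^ (n - 4)) →
      Subgroup.map M.subtype (commutator ↥M) = Subgroup.zpowers (a ^ 2 ^ (n - 3))) :=
  derived_of_M_small_general n a b z₁ z₂ ha hconj hfam M hM
end
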